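/- arXiv:2003.08983 — 4 statements merged into one kernel-verified Lean document; each statement's English description precedes it below -/
import Mathlib

section
/- Let E be a real inner product space, m ≥ 2, σ > 0, and let z_1, …, z_m ∈ E be unit vectors (‖z_i‖ = 1 for all i). Then −∑_{i=1}^m log(∑_{j≠i} exp(⟪z_i, z_j⟫/σ)) ≤ −m·log(m−1) − m/σ + (1/(2σ(m−1))) ∑_{i=1}^m ∑_{j≠i} ‖z_i − z_j‖². (This is the precise form of the claim that the tightness term of SNCA loss is bounded above, up to multiplicative and additive constants, by the tightness term of contrastive loss.) -/
open scoped RealInnerProductSpace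
open Finset Real

lemma card_mul_exp_avg_le_sum_exp {ι : Type*} (s : Finset ι) (hs : s.Nonempty) (a : ι → ℝ) :
    (s.card : ℝ) * Real.exp ((∑ j ∈ s, a j) / s.card) ≤ ∑ j ∈ s, Real.exp (a j) := by
  have hc : (0 : ℝ) < s.card := by exact_mod_cast hs.card_pos
  have h := convexOn_exp.map_sum_le (t := s) (w := fun _ => (s.card : ℝ)⁻¹) (p := a)
    (fun i _ => by positivity) (by simp [Finset.sum_const, hc.ne']) (fun i _ => Set.mem_univ _)
  simp only [smul_eq_mul] at h
  rw [← Finset.mul_sum] at h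
  calc (s.card : ℝ) * Real.exp ((∑ j ∈ s, a j) / s.card)
      = (s.card : ℝ) * Real.exp ((s.card : ℝ)⁻¹ * ∑ j ∈ s, a j) := by rw [div_eq_inv_mul]
    _ ≤ (s.card : ℝ) * ((s.card : ℝ)⁻¹ * ∑ j ∈ s, Real.exp (a j)) := by
        refine mul_le_mul_of_nonneg_left (h.trans_eq ?_) hc.le
        rw [Finset.mul_sum]
    _ = ∑ j ∈ s, Real.exp (a j) := by field_simp

/-- The tightness term of the SNCA loss is bounded above, up to multiplicative and
additive constants, by the tightness term of the contrastive loss: for `m ≥ 2`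
unit vectors `z i`,
`-∑ i, log (∑ j ≠ i, exp (⟪z i, z j⟫ / σ))
  ≤ -m * log (m - 1) - m / σ + (1/(2σ(m-1))) * ∑ i, ∑ j ≠ i, ‖z i - z j‖²`. -/
theorem snca_tightness_le_contrastive_tightness
    {E : Type*} [NormedAddCommGroup E] [InnerProductSpace ℝ E]
    (m : ℕ) (hm : 2 ≤ m) (σ : ℝ) (hσ : 0 < σ)
    (z : Fin m → E) (hz : ∀ i, ‖z i‖ = 1) :
    -∑ i, Real.log (∑ j ∈ univ.erase i, Real.exp (⟪z i, z j⟫ / σ))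
      ≤ -(m : ℝ) * Real.log ((m : ℝ) - 1) - (m : ℝ) / σ
        + (1 / (2 * σ * ((m : ℝ) - 1))) * ∑ i, ∑ j ∈ univ.erase i, ‖z i - z j‖ ^ 2 := by
  have hm1 : (0 : ℝ) < (m : ℝ) - 1 := by
    have : (2 : ℝ) ≤ (m : ℝ) := by exact_mod_cast hm
    linarith
  have hcard : ∀ i : Fin m, ((univ.erase i).card : ℝ) = (m : ℝ) - 1 := by
    intro i
    rw [Finset.card_erase_of_mem (mem_univ i), Finset.card_univ, Fintype.card_fin]
    have : 1 ≤ m := by omega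
    push_cast [Nat.cast_sub this]
    ring
  have hinner : ∀ i j : Fin m, ⟪z i, z j⟫ = 1 - ‖z i - z j‖ ^ 2 / 2 := by
    intro i j
    have := norm_sub_sq_real (z i) (z j)
    rw [hz i, hz j] at this
    nlinarith [this]
  -- key per-i bound
  have key : ∀ i : Fin m,
      -Real.log (∑ j ∈ univ.erase i, Real.exp (⟪z i, z j⟫ / σ))
        ≤ -Real.log ((m : ℝ) - 1) - 1/σ
          + (1 / (2 * σ * ((m : ℝ) - 1))) * ∑ j ∈ univ.erase i, ‖z i - z j‖ ^ 2 := by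
    intro i
    have hne : (univ.erase i).Nonempty := by
      rw [← Finset.card_pos, Finset.card_erase_of_mem (mem_univ i), Finset.card_univ,
        Fintype.card_fin]
      omega
    have hlow := card_mul_exp_avg_le_sum_exp (univ.erase i) hne (fun j => ⟪z i, z j⟫ / σ)
    rw [hcard i] at hlow
    have hpos : (0 : ℝ) < ((m:ℝ) - 1) * Real.exp ((∑ j ∈ univ.erase i, ⟪z i, z j⟫ / σ) / ((m:ℝ)-1)) := by
      positivity
    have hlog := Real.log_le_log hpos hlow
    rw [Real.log_mul hm1.ne' (Real.exp_ne_zero _), Real.log_exp] at hlog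
    have havg : (∑ j ∈ univ.erase i, ⟪z i, z j⟫ / σ) / ((m:ℝ)-1)
        = 1/σ - (1 / (2 * σ * ((m : ℝ) - 1))) * ∑ j ∈ univ.erase i, ‖z i - z j‖ ^ 2 := by
      have : ∑ j ∈ univ.erase i, ⟪z i, z j⟫ / σ
          = ∑ j ∈ univ.erase i, (1 - ‖z i - z j‖ ^ 2 / 2) / σ := by
        exact Finset.sum_congr rfl fun j _ => by rw [hinner i j]
      rw [this]
      have hsum : ∑ j ∈ univ.erase i, (1 - ‖z i - z j‖ ^ 2 / 2) / σ
          = (((m:ℝ)-1) - (∑ j ∈ univ.erase i, ‖z i - z j‖ ^ 2) / 2) / σ := by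
        rw [← Finset.sum_div, Finset.sum_sub_distrib, Finset.sum_const, ← Finset.sum_div,
          nsmul_eq_mul, mul_one, hcard i]
      rw [hsum]
      field_simp
    rw [havg] at hlog
    linarith
  calc -∑ i, Real.log (∑ j ∈ univ.erase i, Real.exp (⟪z i, z j⟫ / σ))
      = ∑ i, -Real.log (∑ j ∈ univ.erase i, Real.exp (⟪z i, z j⟫ / σ)) := by
        rw [← Finset.sum_neg_distrib]
    _ ≤ ∑ i : Fin m, (-Real.log ((m : ℝ) - 1) - 1/σ
          + (1 / (2 * σ * ((m : ℝ) - 1))) * ∑ j ∈ univ.erase i, ‖z i - z j‖ ^ 2) :=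
        Finset.sum_le_sum fun i _ => key i
    _ = -(m : ℝ) * Real.log ((m : ℝ) - 1) - (m : ℝ) / σ
        + (1 / (2 * σ * ((m : ℝ) - 1))) * ∑ i, ∑ j ∈ univ.erase i, ‖z i - z j‖ ^ 2 := by
        rw [Finset.sum_add_distrib, Finset.sum_const, ← Finset.mul_sum]
        simp [Finset.sum_sub_distrib, Fintype.card_fin]
        ring
end

section
/- Let E be a real inner product space, m ≥ 1, α > 0, and let z_1, …, z_m ∈ E be unit vectors (‖z_i‖ = 1 for all i). Then ∑_{i=1}^m (1/α)·log(1 + ∑_{j≠i} exp(−α(⟪z_i, z_j⟫ − 1))) ≥ (m/α)·log m + (1/(2m)) ∑_{i=1}^m ∑_{j=1}^m ‖z_i − z_j‖². (This is the precise form of the claim that the tightness term of the Multi-Similarity loss with margin 1 is bounded below, up to multiplicative and additive constants, by the tightness term of contrastive loss.) -/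
/-!
For unit vectors `-α (⟪z i, z j⟫ - 1) = α ‖z i - z j‖² / 2`, and the diagonal term `j = i` is
`exp 0 = 1`, so the `i`-th summand is `(1/α) log ∑ⱼ exp (α ‖z i - z j‖² / 2)`. Jensen for `exp`
bounds this log-sum-exp below by `log m` plus the mean exponent; summing over `i` gives the claim.
-/

open scoped RealInnerProductSpace
open Finset Real

theorem Real.log_card_add_mean_le_log_sum_exp {ι : Type*} {s : Finset ι} (hs : s.Nonempty)
    (f : ι → ℝ) :
    log #s + (∑ j ∈ s, f j) / #s ≤ log (∑ j ∈ s, exp (f j)) := by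
  have hcard : (0 : ℝ) < #s := by exact_mod_cast hs.card_pos
  have jensen : exp (∑ j ∈ s, (#s : ℝ)⁻¹ • f j) ≤ ∑ j ∈ s, (#s : ℝ)⁻¹ • exp (f j) :=
    convexOn_exp.map_sum_le (fun _ _ => by positivity)
      (by simp [hcard.ne']) (fun _ _ => Set.mem_univ _)
  simp only [smul_eq_mul, ← mul_sum] at jensen
  calc log #s + (∑ j ∈ s, f j) / #s = log (#s * exp ((#s : ℝ)⁻¹ * ∑ j ∈ s, f j)) := by
        rw [log_mul hcard.ne' (exp_pos _).ne', log_exp, div_eq_inv_mul]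
    _ ≤ _ := log_le_log (by positivity) ((le_inv_mul_iff₀ hcard).mp jensen)

theorem real_inner_eq_one_sub_norm_sub_sq_div_two {E : Type*} [NormedAddCommGroup E]
    [InnerProductSpace ℝ E] {x y : E} (hx : ‖x‖ = 1) (hy : ‖y‖ = 1) :
    ⟪x, y⟫ = 1 - ‖x - y‖ ^ 2 / 2 := by
  rw [norm_sub_sq_real, hx, hy]
  ring

theorem log_one_add_sum_exp_inner_ge {ι E : Type*} [Fintype ι] [DecidableEq ι]
    [NormedAddCommGroup E] [InnerProductSpace ℝ E] {α : ℝ} (hα : 0 < α)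
    {z : ι → E} (hz : ∀ i, ‖z i‖ = 1) (i : ι) :
    (1 / α) * log (1 + ∑ j ∈ univ.erase i, exp (-α * (⟪z i, z j⟫ - 1)))
      ≥ (1 / α) * log (Fintype.card ι)
        + (1 / (2 * (Fintype.card ι : ℝ))) * ∑ j, ‖z i - z j‖ ^ 2 := by
  have hexponent : ∀ j, -α * (⟪z i, z j⟫ - 1) = α * ‖z i - z j‖ ^ 2 / 2 := fun j => by
    rw [real_inner_eq_one_sub_norm_sub_sq_div_two (hz i) (hz j)]
    ring
  have hdiagonal : 1 + ∑ j ∈ univ.erase i, exp (-α * (⟪z i, z j⟫ - 1))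
      = ∑ j, exp (α * ‖z i - z j‖ ^ 2 / 2) := by
    rw [← sum_erase_add _ _ (mem_univ i)]
    simp [hexponent, add_comm]
  have hmean := log_card_add_mean_le_log_sum_exp (univ_nonempty_iff.mpr ⟨i⟩)
    (fun j => α * ‖z i - z j‖ ^ 2 / 2)
  rw [← sum_div, ← mul_sum, card_univ] at hmean
  rw [hdiagonal, ge_iff_le]
  calc (1 / α) * log (Fintype.card ι) + (1 / (2 * (Fintype.card ι : ℝ))) * ∑ j, ‖z i - z j‖ ^ 2
      = (1 / α) * (log (Fintype.card ι) + α * (∑ j, ‖z i - z j‖ ^ 2) / 2 / Fintype.card ι) := by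
        field_simp
    _ ≤ _ := mul_le_mul_of_nonneg_left hmean (by positivity)

theorem ms_tightness_ge_contrastive_tightness_general
    {E : Type*} [NormedAddCommGroup E] [InnerProductSpace ℝ E]
    (m : ℕ) (α : ℝ) (hα : 0 < α)
    (z : Fin m → E) (hz : ∀ i, ‖z i‖ = 1) :
    ∑ i, (1 / α) * Real.log (1 + ∑ j ∈ univ.erase i, Real.exp (-α * (⟪z i, z j⟫ - 1)))
      ≥ ((m : ℝ) / α) * Real.log (m : ℝ)
        + (1 / (2 * (m : ℝ))) * ∑ i, ∑ j, ‖z i - z j‖ ^ 2 := by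
  have hrows := fun i => log_one_add_sum_exp_inner_ge hα hz i
  simp only [Fintype.card_fin] at hrows
  calc ((m : ℝ) / α) * log m + (1 / (2 * (m : ℝ))) * ∑ i, ∑ j, ‖z i - z j‖ ^ 2
      = ∑ i : Fin m, ((1 / α) * log m + (1 / (2 * (m : ℝ))) * ∑ j, ‖z i - z j‖ ^ 2) := by
        rw [sum_add_distrib, sum_const, card_univ, Fintype.card_fin, nsmul_eq_mul, ← mul_sum]
        ring
    _ ≤ _ := sum_le_sum fun i _ => hrows i

/-- The tightness term of the Multi-Similarity loss with margin 1 is bounded below,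
up to multiplicative and additive constants, by the tightness term of the contrastive
loss: for `m ≥ 1` unit vectors `z i` and `α > 0`,
`∑ i, (1/α) * log (1 + ∑ j ≠ i, exp (-α (⟪z i, z j⟫ - 1)))
  ≥ (m/α) * log m + (1/(2m)) * ∑ i, ∑ j, ‖z i - z j‖²`. -/
theorem ms_tightness_ge_contrastive_tightness
    {E : Type*} [NormedAddCommGroup E] [InnerProductSpace ℝ E]
    (m : ℕ) (hm : 1 ≤ m) (α : ℝ) (hα : 0 < α)
    (z : Fin m → E) (hz : ∀ i, ‖z i‖ = 1) :
    ∑ i, (1 / α) * Real.log (1 + ∑ j ∈ univ.erase i, Real.exp (-α * (⟪z i, z j⟫ - 1)))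
      ≥ ((m : ℝ) / α) * Real.log (m : ℝ)
        + (1 / (2 * (m : ℝ))) * ∑ i, ∑ j, ‖z i - z j‖ ^ 2 :=
  ms_tightness_ge_contrastive_tightness_general m α hα z hz
end

section
/- Let E be a real inner product space, n ≥ 1, β > 0, and let z_1, …, z_n ∈ E be unit vectors with labels y_1, …, y_n. Suppose classes are balanced in the sense that every sample has exactly N ≥ 1 negatives: for all i, the set {j : y_j ≠ y_i} has cardinality N. Then (1/(βn)) ∑_{i=1}^n log(1 + ∑_{j : y_j ≠ y_i} exp(β(⟪z_i, z_j⟫ − 1))) ≥ (1/β)·log N − (1/(2nN)) ∑_{i=1}^n ∑_{j : y_j ≠ y_i} ‖z_i − z_j‖². (This shows the contrastive part of the Multi-Similarity loss is an upper bound, up to constants, on the common contrastive term C = −(1/n)∑_i ∑_{j:y_j≠y_i} ‖z_i − z_j‖².) -/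
open scoped RealInnerProductSpace
open Finset Real

/-! By Jensen's inequality for `exp`, `log (1 + ∑ j, exp a_j) ≥ log N + (∑ j, a_j) / N` for any
`N` reals `a_j`; for unit vectors `⟪z_i, z_j⟫ - 1 = -‖z_i - z_j‖² / 2`, so applying this to each
sample and averaging gives the bound. -/

theorem card_mul_exp_mean_le_sum_exp {ι : Type*} (s : Finset ι) (a : ι → ℝ) :
    #s * exp ((∑ j ∈ s, a j) / #s) ≤ ∑ j ∈ s, exp (a j) := by
  rcases s.eq_empty_or_nonempty with rfl | hs
  · simp
  have hcard : (0 : ℝ) < #s := by exact_mod_cast hs.card_pos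
  have jensen := convexOn_exp.map_sum_le (t := s) (w := fun _ => (#s : ℝ)⁻¹) (p := a)
    (fun _ _ => by positivity) (by simp [hcard.ne']) (fun _ _ => Set.mem_univ _)
  simp only [smul_eq_mul, ← mul_sum] at jensen
  rw [div_eq_inv_mul]
  calc #s * exp ((#s : ℝ)⁻¹ * ∑ j ∈ s, a j)
      ≤ #s * ((#s : ℝ)⁻¹ * ∑ j ∈ s, exp (a j)) := by gcongr
    _ = ∑ j ∈ s, exp (a j) := by field_simp

/-- For `s = ∅` both sides vanish, since `log 0 = 0` and `x / 0 = 0`. -/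
theorem log_card_add_mean_le_log_one_add_sum_exp {ι : Type*} (s : Finset ι) (a : ι → ℝ) :
    log #s + (∑ j ∈ s, a j) / #s ≤ log (1 + ∑ j ∈ s, exp (a j)) := by
  rcases s.eq_empty_or_nonempty with rfl | hs
  · simp
  have hcard : (0 : ℝ) < #s := by exact_mod_cast hs.card_pos
  calc log #s + (∑ j ∈ s, a j) / #s = log (#s * exp ((∑ j ∈ s, a j) / #s)) := by
        rw [log_mul hcard.ne' (exp_ne_zero _), log_exp]
    _ ≤ log (1 + ∑ j ∈ s, exp (a j)) := by
        gcongr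
        linarith [card_mul_exp_mean_le_sum_exp s a]

theorem inner_sub_one_of_norm_eq_one {E : Type*} [NormedAddCommGroup E] [InnerProductSpace ℝ E]
    {x y : E} (hx : ‖x‖ = 1) (hy : ‖y‖ = 1) : ⟪x, y⟫ - 1 = -(‖x - y‖ ^ 2 / 2) := by
  rw [norm_sub_sq_real, hx, hy]
  ring

theorem ms_contrastive_ge_general
    {E : Type*} [NormedAddCommGroup E] [InnerProductSpace ℝ E]
    {L : Type*} [DecidableEq L]
    (n : ℕ) (hn : 1 ≤ n) (β : ℝ) (hβ : 0 < β)
    (z : Fin n → E) (hz : ∀ i, ‖z i‖ = 1)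
    (y : Fin n → L)
    (N : ℕ)
    (hbal : ∀ i, (univ.filter (fun j => y j ≠ y i)).card = N) :
    (1 / (β * (n : ℝ))) *
        ∑ i, Real.log (1 + ∑ j ∈ univ.filter (fun j => y j ≠ y i),
          Real.exp (β * (⟪z i, z j⟫ - 1)))
      ≥ (1 / β) * Real.log (N : ℝ)
        - (1 / (2 * (n : ℝ) * (N : ℝ))) *
            ∑ i, ∑ j ∈ univ.filter (fun j => y j ≠ y i), ‖z i - z j‖ ^ 2 := by
  set D : Fin n → ℝ := fun i => ∑ j ∈ univ.filter (fun j => y j ≠ y i), ‖z i - z j‖ ^ 2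
  have per_sample : ∀ i, log N - β / (2 * N) * D i ≤
      log (1 + ∑ j ∈ univ.filter (fun j => y j ≠ y i), exp (β * (⟪z i, z j⟫ - 1))) := by
    intro i
    have exponents : ∑ j ∈ univ.filter (fun j => y j ≠ y i), β * (⟪z i, z j⟫ - 1) =
        -(β / 2 * D i) := by
      simp only [D, inner_sub_one_of_norm_eq_one (hz i) (hz _), mul_sum, ← sum_neg_distrib]
      ring_nf
    have h := log_card_add_mean_le_log_one_add_sum_exp (univ.filter (fun j => y j ≠ y i))
      (fun j => β * (⟪z i, z j⟫ - 1))
    rw [exponents, hbal i] at h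
    convert h using 2
    ring
  have summed := sum_le_sum fun i (_ : i ∈ univ) => per_sample i
  rw [sum_sub_distrib, ← mul_sum, sum_const, card_univ, Fintype.card_fin, nsmul_eq_mul] at summed
  have hβn : 0 < β * n := mul_pos hβ (by exact_mod_cast hn)
  calc (1 / β) * log N - 1 / (2 * n * N) * ∑ i, D i
      = 1 / (β * n) * (n * log N - β / (2 * N) * ∑ i, D i) := by
        field_simp
    _ ≤ _ := by gcongr

/-- The contrastive part of the Multi-Similarity loss is an upper bound, up to
constants, on the common contrastive term `C = -(1/n) ∑ i ∑ (j : y j ≠ y i), ‖z i - z j‖²`: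
if every sample has exactly `N ≥ 1` negatives, then
`(1/(βn)) ∑ i, log (1 + ∑ (j : y j ≠ y i), exp (β (⟪z i, z j⟫ - 1)))
  ≥ (1/β) * log N - (1/(2nN)) ∑ i ∑ (j : y j ≠ y i), ‖z i - z j‖²`. -/
theorem ms_contrastive_ge
    {E : Type*} [NormedAddCommGroup E] [InnerProductSpace ℝ E]
    {L : Type*} [DecidableEq L]
    (n : ℕ) (hn : 1 ≤ n) (β : ℝ) (hβ : 0 < β)
    (z : Fin n → E) (hz : ∀ i, ‖z i‖ = 1)
    (y : Fin n → L)
    (N : ℕ) (hN : 1 ≤ N)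
    (hbal : ∀ i, (univ.filter (fun j => y j ≠ y i)).card = N) :
    (1 / (β * (n : ℝ))) *
        ∑ i, Real.log (1 + ∑ j ∈ univ.filter (fun j => y j ≠ y i),
          Real.exp (β * (⟪z i, z j⟫ - 1)))
      ≥ (1 / β) * Real.log (N : ℝ)
        - (1 / (2 * (n : ℝ) * (N : ℝ))) *
            ∑ i, ∑ j ∈ univ.filter (fun j => y j ≠ y i), ‖z i - z j‖ ^ 2 :=
  ms_contrastive_ge_general n hn β hβ z hz y N hbal
end

section
/- Let E be a real inner product space, n ≥ 1, σ > 0, and let z_1, …, z_n ∈ E be unit vectors with labels y_1, …, y_n. Suppose every sample has exactly N ≥ 1 negatives: for all i, the set {j : y_j ≠ y_i} has cardinality N. Then (1/n) ∑_{i=1}^n log(∑_{j ≠ i} exp(⟪z_i, z_j⟫/σ)) ≥ log N + 1/σ − (1/(2σnN)) ∑_{i=1}^n ∑_{j : y_j ≠ y_i} ‖z_i − z_j‖². (This shows the contrastive part of the SNCA loss is an upper bound, up to constants, on the common contrastive term C = −(1/n)∑_i ∑_{j:y_j≠y_i} ‖z_i − z_j‖².) -/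
open scoped RealInnerProductSpace
open Finset Real

theorem Real.log_sum_exp_le_of_subset {ι : Type*} {s t : Finset ι} (hs : s.Nonempty)
    (hst : s ⊆ t) (f : ι → ℝ) :
    log (∑ j ∈ s, exp (f j)) ≤ log (∑ j ∈ t, exp (f j)) :=
  log_le_log (sum_pos (fun _ _ => exp_pos _) hs)
    (sum_le_sum_of_subset_of_nonneg hst fun _ _ _ => (exp_pos _).le)

theorem log_card_add_inv_sub_le_log_sum_exp_inner {E ι : Type*} [NormedAddCommGroup E]
    [InnerProductSpace ℝ E] {x : E} (hx : ‖x‖ = 1) {z : ι → E} (hz : ∀ j, ‖z j‖ = 1)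
    {s t : Finset ι} (hs : s.Nonempty) (hst : s ⊆ t) (σ : ℝ) :
    log #s + 1 / σ - (1 / (2 * σ * #s)) * ∑ j ∈ s, ‖x - z j‖ ^ 2
      ≤ log (∑ j ∈ t, exp (⟪x, z j⟫ / σ)) := by
  have hmean : (∑ j ∈ s, ⟪x, z j⟫ / σ) / #s
      = 1 / σ - (1 / (2 * σ * #s)) * ∑ j ∈ s, ‖x - z j‖ ^ 2 := by
    simp only [real_inner_eq_one_sub_norm_sub_sq_div_two hx (hz _), sub_div, sum_sub_distrib,
      sum_const, nsmul_eq_mul, ← sum_div]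
    field_simp
  rw [add_sub_assoc, ← hmean]
  exact (log_card_add_mean_le_log_sum_exp hs _).trans (log_sum_exp_le_of_subset hs hst _)

theorem snca_contrastive_ge_general
    {E : Type*} [NormedAddCommGroup E] [InnerProductSpace ℝ E]
    {L : Type*} [DecidableEq L]
    (n : ℕ) (hn : 1 ≤ n) (σ : ℝ)
    (z : Fin n → E) (hz : ∀ i, ‖z i‖ = 1)
    (y : Fin n → L)
    (N : ℕ) (hN : 1 ≤ N)
    (hbal : ∀ i, (univ.filter (fun j => y j ≠ y i)).card = N) :
    (1 / (n : ℝ)) * ∑ i, Real.log (∑ j ∈ univ.erase i, Real.exp (⟪z i, z j⟫ / σ))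
      ≥ Real.log (N : ℝ) + 1 / σ
        - (1 / (2 * σ * (n : ℝ) * (N : ℝ))) *
            ∑ i, ∑ j ∈ univ.filter (fun j => y j ≠ y i), ‖z i - z j‖ ^ 2 := by
  have per_sample (i : Fin n) :
      log N + 1 / σ - (1 / (2 * σ * N)) * ∑ j ∈ univ.filter (fun j => y j ≠ y i), ‖z i - z j‖ ^ 2
        ≤ log (∑ j ∈ univ.erase i, exp (⟪z i, z j⟫ / σ)) := by
    have hne : (univ.filter (fun j => y j ≠ y i)).Nonempty := by
      rw [← card_pos, hbal i]; exact hN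
    have hsub : univ.filter (fun j => y j ≠ y i) ⊆ univ.erase i := fun j hj =>
      mem_erase.2 ⟨fun h => (mem_filter.1 hj).2 (h ▸ rfl), mem_univ j⟩
    simpa only [hbal i] using log_card_add_inv_sub_le_log_sum_exp_inner (hz i) hz hne hsub σ
  have hn' : (n : ℝ) ≠ 0 := by positivity
  calc log N + 1 / σ
        - (1 / (2 * σ * n * N)) * ∑ i, ∑ j ∈ univ.filter (fun j => y j ≠ y i), ‖z i - z j‖ ^ 2
      = (1 / (n : ℝ)) * ∑ i : Fin n, (log N + 1 / σ - (1 / (2 * σ * N)) *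
          ∑ j ∈ univ.filter (fun j => y j ≠ y i), ‖z i - z j‖ ^ 2) := by
        rw [sum_sub_distrib, sum_const, card_univ, Fintype.card_fin, nsmul_eq_mul, ← mul_sum]
        field_simp
    _ ≤ _ := mul_le_mul_of_nonneg_left (sum_le_sum fun i _ => per_sample i) (by positivity)

/-- The contrastive part of the SNCA loss is an upper bound, up to constants, on the
common contrastive term `C = -(1/n) ∑ i ∑ (j : y j ≠ y i), ‖z i - z j‖²`:
if every sample has exactly `N ≥ 1` negatives, then
`(1/n) ∑ i, log (∑ j ≠ i, exp (⟪z i, z j⟫ / σ))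
  ≥ log N + 1/σ - (1/(2σnN)) ∑ i ∑ (j : y j ≠ y i), ‖z i - z j‖²`. -/
theorem snca_contrastive_ge
    {E : Type*} [NormedAddCommGroup E] [InnerProductSpace ℝ E]
    {L : Type*} [DecidableEq L]
    (n : ℕ) (hn : 1 ≤ n) (σ : ℝ) (hσ : 0 < σ)
    (z : Fin n → E) (hz : ∀ i, ‖z i‖ = 1)
    (y : Fin n → L)
    (N : ℕ) (hN : 1 ≤ N)
    (hbal : ∀ i, (univ.filter (fun j => y j ≠ y i)).card = N) :
    (1 / (n : ℝ)) * ∑ i, Real.log (∑ j ∈ univ.erase i, Real.exp (⟪z i, z j⟫ / σ))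
      ≥ Real.log (N : ℝ) + 1 / σ
        - (1 / (2 * σ * (n : ℝ) * (N : ℝ))) *
            ∑ i, ∑ j ∈ univ.filter (fun j => y j ≠ y i), ‖z i - z j‖ ^ 2 :=
  snca_contrastive_ge_general n hn σ z hz y N hN hbal
end
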